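/- arXiv:1305.1081 — 5 statements merged into one kernel-verified Lean document; each statement's English description precedes it below -/
import Mathlib

section
/- Let A be a real vector space with a modular ρ satisfying the Δ₂-condition such that A_ρ is complete, and let P be a cone in A_ρ that is normal with normal constant c > 0 (i.e., 0 ≼ x ≼ y implies ρ(x) ≤ cρ(y)). Define σ(x) = inf_{y ≼ x} ρ(y) + inf_{x ≼ z} ρ(z) for x ∈ A_ρ. Then σ is a modular on A_ρ; in particular, σ(x) = 0 implies x = 0, σ(−x) = σ(x), and σ(αx + βu) ≤ σ(x) + σ(u) for all x, u ∈ A_ρ and all α, β ≥ 0 with α + β = 1. -/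
/-!
Write `σ x = infBelow x + infAbove x`, the infima of `ρ` over `{y ≼ x}` and over `{x ≼ z}`.
Negation reverses `≼`, so it swaps the two infima. Convex combinations preserve `≼`, so the
convexity inequality of `ρ` passes to each infimum separately. For definiteness, whenever
`y ≼ x ≼ z`, normality applied to `0 ≼ x - y ≼ z - y` and the Δ₂-condition give
`ρ x ≤ k (ρ (x - y) + ρ y) ≤ k (c k (ρ z + ρ y) + ρ y) ≤ k (c k + 1) (ρ y + ρ z)`,
and taking infima over `y` and `z` yields `ρ x ≤ k (c k + 1) σ x`.
-/

open Filter Topology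

/-- `ρ` is a modular on the real vector space `A`. -/
def IsModular {A : Type*} [AddCommGroup A] [Module ℝ A] (ρ : A → ℝ) : Prop :=
  (∀ x : A, ρ x = 0 ↔ x = 0) ∧ (∀ x : A, ρ (-x) = ρ x) ∧
  ∀ (x y : A) (a b : ℝ), 0 ≤ a → 0 ≤ b → a + b = 1 → ρ (a • x + b • y) ≤ ρ x + ρ y

/-- The Δ₂-condition for `ρ` with constant `k`. -/
def SatisfiesDelta2 {A : Type*} [AddCommGroup A] [Module ℝ A] (ρ : A → ℝ) (k : ℝ) : Prop :=
  0 < k ∧ ∀ x : A, ρ ((2 : ℝ) • x) ≤ k * ρ x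

/-- Every vector of `A` lies in the modular space `A_ρ`, i.e. `ρ (α • x) → 0` as `α → 0`. -/
def IsModularSpace {A : Type*} [AddCommGroup A] [Module ℝ A] (ρ : A → ℝ) : Prop :=
  ∀ x : A, Tendsto (fun t : ℝ => ρ (t • x)) (𝓝 0) (𝓝 0)

/-- `A_ρ` is ρ-complete: every ρ-Cauchy sequence ρ-converges. -/
def RhoComplete {A : Type*} [AddCommGroup A] [Module ℝ A] (ρ : A → ℝ) : Prop :=
  ∀ u : ℕ → A,
    (∀ ε > (0 : ℝ), ∃ N : ℕ, ∀ m ≥ N, ∀ n ≥ N, ρ (u m - u n) < ε) →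
    ∃ x : A, Tendsto (fun n => ρ (u n - x)) atTop (𝓝 0)

/-- A set is ρ-closed if it contains limits of its ρ-convergent sequences. -/
def RhoClosed {A : Type*} [AddCommGroup A] [Module ℝ A] (ρ : A → ℝ) (S : Set A) : Prop :=
  ∀ (u : ℕ → A) (x : A), (∀ n, u n ∈ S) →
    Tendsto (fun n => ρ (u n - x)) atTop (𝓝 0) → x ∈ S

/-- `P` is a cone in `A_ρ`. -/
def IsCone {A : Type*} [AddCommGroup A] [Module ℝ A] (ρ : A → ℝ) (P : Set A) : Prop :=
  RhoClosed ρ P ∧ P.Nonempty ∧ P ≠ {0} ∧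
  (∀ (a b : ℝ), 0 ≤ a → 0 ≤ b → ∀ x ∈ P, ∀ y ∈ P, a • x + b • y ∈ P) ∧
  (∀ x : A, x ∈ P → -x ∈ P → x = 0)

/-- The partial order induced by the cone `P`: `x ≼ y` iff `y - x ∈ P`. -/
def coneLE {A : Type*} [AddCommGroup A] [Module ℝ A] (P : Set A) (x y : A) : Prop :=
  y - x ∈ P

/-- `P` is normal with normal constant `c`: `0 ≼ x ≼ y` implies `ρ x ≤ c * ρ y`. -/
def IsNormalCone {A : Type*} [AddCommGroup A] [Module ℝ A]
    (ρ : A → ℝ) (P : Set A) (c : ℝ) : Prop :=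
  ∀ x y : A, x ∈ P → coneLE P x y → ρ x ≤ c * ρ y

/-- The modular `σ(x) = inf_{y ≼ x} ρ(y) + inf_{x ≼ z} ρ(z)`. -/
noncomputable def sigmaModular {A : Type*} [AddCommGroup A] [Module ℝ A]
    (ρ : A → ℝ) (P : Set A) (x : A) : ℝ :=
  sInf (ρ '' {y | coneLE P y x}) + sInf (ρ '' {z | coneLE P x z})

section

variable {A : Type*} [AddCommGroup A] [Module ℝ A] {ρ : A → ℝ} {P : Set A}

theorem le_sInf_image_add_sInf_image {α : Type*} {f g : α → ℝ} {S T : Set α} {r : ℝ}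
    (hS : S.Nonempty) (hT : T.Nonempty) (h : ∀ y ∈ S, ∀ z ∈ T, r ≤ f y + g z) :
    r ≤ sInf (f '' S) + sInf (g '' T) := by
  have := hS.to_subtype
  have := hT.to_subtype
  rw [sInf_image', sInf_image']
  exact le_ciInf_add_ciInf fun y z => h y y.2 z z.2

namespace IsModular

variable (hρ : IsModular ρ)
include hρ

theorem map_zero : ρ 0 = 0 := (hρ.1 0).2 rfl

theorem map_neg (x : A) : ρ (-x) = ρ x := hρ.2.1 x

theorem map_smul_add_smul_le (x y : A) {a b : ℝ} (ha : 0 ≤ a) (hb : 0 ≤ b) (hab : a + b = 1) :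
    ρ (a • x + b • y) ≤ ρ x + ρ y :=
  hρ.2.2 x y a b ha hb hab

theorem nonneg (x : A) : 0 ≤ ρ x := by
  have h := hρ.map_smul_add_smul_le x (-x) (a := 1 / 2) (b := 1 / 2) (by norm_num) (by norm_num)
    (by norm_num)
  rw [show (1 / 2 : ℝ) • x + (1 / 2 : ℝ) • -x = 0 by module, hρ.map_zero, hρ.map_neg] at h
  linarith

theorem map_add_le {k : ℝ} (hk : SatisfiesDelta2 ρ k) (x y : A) :
    ρ (x + y) ≤ k * (ρ x + ρ y) :=
  calc ρ (x + y) = ρ ((2 : ℝ) • ((1 / 2 : ℝ) • x + (1 / 2 : ℝ) • y)) := by congr 1; module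
    _ ≤ k * ρ ((1 / 2 : ℝ) • x + (1 / 2 : ℝ) • y) := hk.2 _
    _ ≤ k * (ρ x + ρ y) := by
      gcongr
      · exact hk.1.le
      · exact hρ.map_smul_add_smul_le x y (by norm_num) (by norm_num) (by norm_num)

theorem map_sub_le {k : ℝ} (hk : SatisfiesDelta2 ρ k) (x y : A) :
    ρ (x - y) ≤ k * (ρ x + ρ y) := by
  simpa only [sub_eq_add_neg, hρ.map_neg] using hρ.map_add_le hk x (-y)

theorem bddBelow_image (s : Set A) : BddBelow (ρ '' s) :=
  ⟨0, Set.forall_mem_image.2 fun y _ => hρ.nonneg y⟩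

end IsModular

theorem IsCone.smul_add_smul_mem (hP : IsCone ρ P) {x y : A} (hx : x ∈ P) (hy : y ∈ P)
    {a b : ℝ} (ha : 0 ≤ a) (hb : 0 ≤ b) : a • x + b • y ∈ P :=
  hP.2.2.2.1 a b ha hb x hx y hy

theorem IsCone.zero_mem (hP : IsCone ρ P) : (0 : A) ∈ P := by
  obtain ⟨p, hp⟩ := hP.2.1
  simpa using hP.smul_add_smul_mem hp hp le_rfl le_rfl

theorem coneLE_refl (h0 : (0 : A) ∈ P) (x : A) : coneLE P x x := by
  unfold coneLE
  rwa [sub_self]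

theorem coneLE_neg_comm {x y : A} : coneLE P y (-x) ↔ coneLE P x (-y) := by
  unfold coneLE
  rw [neg_sub_comm]

theorem coneLE.smul_add_smul (hP : IsCone ρ P) {x y x' y' : A} (h : coneLE P x y)
    (h' : coneLE P x' y') {a b : ℝ} (ha : 0 ≤ a) (hb : 0 ≤ b) :
    coneLE P (a • x + b • x') (a • y + b • y') := by
  have := hP.smul_add_smul_mem h h' ha hb
  unfold coneLE
  convert this using 1
  module

theorem modular_le_of_coneLE (hρ : IsModular ρ) {k c : ℝ} (hk : SatisfiesDelta2 ρ k)
    (hc : 0 ≤ c) (hnormal : IsNormalCone ρ P c) {x y z : A}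
    (hyx : coneLE P y x) (hxz : coneLE P x z) :
    ρ x ≤ k * (c * k + 1) * (ρ y + ρ z) := by
  have hzy : coneLE P (x - y) (z - y) := by
    unfold coneLE
    rwa [sub_sub_sub_cancel_right]
  have hnorm : ρ (x - y) ≤ c * (k * (ρ z + ρ y)) :=
    (hnormal _ _ hyx hzy).trans (by gcongr; exact hρ.map_sub_le hk z y)
  calc ρ x = ρ ((x - y) + y) := by rw [sub_add_cancel]
    _ ≤ k * (ρ (x - y) + ρ y) := hρ.map_add_le hk _ _
    _ ≤ k * (c * (k * (ρ z + ρ y)) + ρ y) := by gcongr; exact hk.1.le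
    _ ≤ k * (c * k + 1) * (ρ y + ρ z) := by nlinarith [mul_nonneg hk.1.le (hρ.nonneg z)]

variable (ρ P)

noncomputable def infBelow (x : A) : ℝ := sInf (ρ '' {y | coneLE P y x})

noncomputable def infAbove (x : A) : ℝ := sInf (ρ '' {z | coneLE P x z})

theorem sigmaModular_eq (x : A) : sigmaModular ρ P x = infBelow ρ P x + infAbove ρ P x := rfl

variable {ρ P}

theorem infBelow_neg (hneg : ∀ x, ρ (-x) = ρ x) (x : A) : infBelow ρ P (-x) = infAbove ρ P x := by
  unfold infBelow infAbove
  congr 1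
  ext r
  constructor
  · rintro ⟨y, hy, rfl⟩
    exact ⟨-y, coneLE_neg_comm.1 hy, hneg y⟩
  · rintro ⟨z, hz, rfl⟩
    exact ⟨-z, coneLE_neg_comm.2 (by rwa [neg_neg]), hneg z⟩

theorem infAbove_neg (hneg : ∀ x, ρ (-x) = ρ x) (x : A) : infAbove ρ P (-x) = infBelow ρ P x := by
  rw [← infBelow_neg hneg, neg_neg]

theorem sigmaModular_neg (hneg : ∀ x, ρ (-x) = ρ x) (x : A) :
    sigmaModular ρ P (-x) = sigmaModular ρ P x := by
  rw [sigmaModular_eq, sigmaModular_eq, infBelow_neg hneg, infAbove_neg hneg, add_comm]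

variable (hρ : IsModular ρ)
include hρ

theorem infBelow_nonneg (x : A) : 0 ≤ infBelow ρ P x :=
  Real.sInf_nonneg <| Set.forall_mem_image.2 fun y _ => hρ.nonneg y

theorem infAbove_nonneg (x : A) : 0 ≤ infAbove ρ P x :=
  Real.sInf_nonneg <| Set.forall_mem_image.2 fun y _ => hρ.nonneg y

theorem infBelow_le {x y : A} (h : coneLE P y x) : infBelow ρ P x ≤ ρ y :=
  csInf_le (hρ.bddBelow_image _) ⟨y, h, rfl⟩

theorem infAbove_le {x z : A} (h : coneLE P x z) : infAbove ρ P x ≤ ρ z :=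
  csInf_le (hρ.bddBelow_image _) ⟨z, h, rfl⟩

theorem sigmaModular_zero (h0 : (0 : A) ∈ P) : sigmaModular ρ P 0 = 0 := by
  have hb := infBelow_le (P := P) hρ (coneLE_refl h0 0)
  have ha := infAbove_le (P := P) hρ (coneLE_refl h0 0)
  rw [hρ.map_zero] at hb ha
  linarith [infBelow_nonneg (P := P) hρ 0, infAbove_nonneg (P := P) hρ 0, sigmaModular_eq ρ P 0]

theorem modular_le_mul_sigmaModular {k c : ℝ} (hk : SatisfiesDelta2 ρ k) (hc : 0 ≤ c)
    (h0 : (0 : A) ∈ P) (hnormal : IsNormalCone ρ P c) (x : A) :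
    ρ x ≤ k * (c * k + 1) * sigmaModular ρ P x := by
  have hK : 0 < k * (c * k + 1) := by have := hk.1; positivity
  rw [← div_le_iff₀' hK]
  exact le_sInf_image_add_sInf_image ⟨x, coneLE_refl h0 x⟩ ⟨x, coneLE_refl h0 x⟩
    fun y hy z hz => (div_le_iff₀' hK).2 (modular_le_of_coneLE hρ hk hc hnormal hy hz)

theorem sigmaModular_smul_add_smul_le (hP : IsCone ρ P) (x u : A) {a b : ℝ}
    (ha : 0 ≤ a) (hb : 0 ≤ b) (hab : a + b = 1) :
    sigmaModular ρ P (a • x + b • u) ≤ sigmaModular ρ P x + sigmaModular ρ P u := by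
  have h0 := hP.zero_mem
  have hbelow : infBelow ρ P (a • x + b • u) ≤ infBelow ρ P x + infBelow ρ P u :=
    le_sInf_image_add_sInf_image ⟨x, coneLE_refl h0 x⟩ ⟨u, coneLE_refl h0 u⟩
      fun y hy y' hy' => (infBelow_le hρ (hy.smul_add_smul hP hy' ha hb)).trans
        (hρ.map_smul_add_smul_le y y' ha hb hab)
  have habove : infAbove ρ P (a • x + b • u) ≤ infAbove ρ P x + infAbove ρ P u :=
    le_sInf_image_add_sInf_image ⟨x, coneLE_refl h0 x⟩ ⟨u, coneLE_refl h0 u⟩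
      fun z hz z' hz' => (infAbove_le hρ (hz.smul_add_smul hP hz' ha hb)).trans
        (hρ.map_smul_add_smul_le z z' ha hb hab)
  simp only [sigmaModular_eq]
  linarith

end

theorem sigma_is_modular_general
    {A : Type*} [AddCommGroup A] [Module ℝ A] (ρ : A → ℝ)
    (hmod : IsModular ρ) (hΔ₂ : ∃ k : ℝ, SatisfiesDelta2 ρ k)
    (P : Set A) (hP : IsCone ρ P)
    (c : ℝ) (hc : 0 < c) (hnormal : IsNormalCone ρ P c) :
    IsModular (sigmaModular ρ P) := by
  obtain ⟨k, hk⟩ := hΔ₂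
  refine ⟨fun x => ⟨fun hx => ?_, ?_⟩, sigmaModular_neg hmod.map_neg,
    fun x u a b ha hb hab => sigmaModular_smul_add_smul_le hmod hP x u ha hb hab⟩
  · have := modular_le_mul_sigmaModular hmod hk hc.le hP.zero_mem hnormal x
    rw [hx, mul_zero] at this
    exact (hmod.1 x).1 (this.antisymm (hmod.nonneg x))
  · rintro rfl
    exact sigmaModular_zero hmod hP.zero_mem

/-- `σ` is a modular on `A_ρ`. -/
theorem sigma_is_modular
    {A : Type*} [AddCommGroup A] [Module ℝ A] (ρ : A → ℝ)
    (hmod : IsModular ρ) (hΔ₂ : ∃ k : ℝ, SatisfiesDelta2 ρ k)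
    (hms : IsModularSpace ρ) (hcomplete : RhoComplete ρ)
    (P : Set A) (hP : IsCone ρ P)
    (c : ℝ) (hc : 0 < c) (hnormal : IsNormalCone ρ P c) :
    IsModular (sigmaModular ρ P) :=
  sigma_is_modular_general ρ hmod hΔ₂ P hP c hc hnormal
end

section
/- Let A be a real vector space with a convex modular ρ satisfying the Δ₂-condition such that A_ρ is complete, let P be a cone in A_ρ that is unital and normal with normal constant 1, and let (X, d, P) be a unital-normal vector ultrametric space. Then the vector ultrametric is jointly continuous in the following sense: if (xₙ) and (yₙ) are sequences in X with ρ(d(xₙ, x)) → 0 and ρ(d(yₙ, y)) → 0 for some x, y ∈ X, then ρ(d(xₙ, yₙ)) → ρ(d(x, y)) as n → ∞. -/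
open Filter Topology

/-- `ρ` is a convex modular. -/
def IsConvexModular {A : Type*} [AddCommGroup A] [Module ℝ A] (ρ : A → ℝ) : Prop :=
  IsModular ρ ∧
  ∀ (x y : A) (a b : ℝ), 0 ≤ a → 0 ≤ b → a + b = 1 →
    ρ (a • x + b • y) ≤ a * ρ x + b * ρ y

/-- `P` is normal with normal constant `1`: `0 ≼ x ≼ y` implies `ρ x ≤ ρ y`. -/
def IsNormalCone1 {A : Type*} [AddCommGroup A] [Module ℝ A] (ρ : A → ℝ) (P : Set A) : Prop :=
  ∀ x y : A, x ∈ P → coneLE P x y → ρ x ≤ ρ y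

/-- `e` is a unit for the cone `P`: `e ∈ P`, `ρ e = 1` and `x ≼ ρ(x) • e` for all `x ∈ P`. -/
def IsUnit' {A : Type*} [AddCommGroup A] [Module ℝ A] (ρ : A → ℝ) (P : Set A) (e : A) : Prop :=
  e ∈ P ∧ ρ e = 1 ∧ ∀ x ∈ P, coneLE P x (ρ x • e)

/-- `d` is a vector ultrametric on `X` with values in the cone `P ⊆ A_ρ`. -/
def IsVectorUltrametric {A : Type*} [AddCommGroup A] [Module ℝ A]
    {X : Type*} (P : Set A) (d : X → X → A) : Prop :=
  (∀ x y : X, d x y ∈ P) ∧ (∀ x y : X, d x y = 0 ↔ x = y) ∧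
  (∀ x y : X, d x y = d y x) ∧
  (∀ x y z : X, ∀ p ∈ P, coneLE P (d x z) p → coneLE P (d y z) p → coneLE P (d x y) p)

/-- The ball centered at `x` with radius `p`. -/
def vBall {A : Type*} [AddCommGroup A] [Module ℝ A] {X : Type*}
    (ρ : A → ℝ) (d : X → X → A) (x : X) (p : A) : Set X :=
  {y | ρ (d x y) ≤ ρ p}

/-- Spherical completeness: every chain of balls has nonempty intersection. -/
def SphericallyCompleteVUM {A : Type*} [AddCommGroup A] [Module ℝ A] {X : Type*}
    (ρ : A → ℝ) (P : Set A) (d : X → X → A) : Prop :=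
  ∀ C : Set (Set X),
    (∀ S ∈ C, ∃ (x : X) (p : A), p ∈ P ∧ p ≠ 0 ∧ S = vBall ρ d x p) →
    IsChain (· ⊆ ·) C → (⋂₀ C).Nonempty

/-- A subset `G ⊆ X` is compact: every sequence in `G` has a subsequence
converging (with respect to `ρ ∘ d`) to a point of `G`. -/
def VUMCompact {A : Type*} [AddCommGroup A] [Module ℝ A] {X : Type*}
    (ρ : A → ℝ) (d : X → X → A) (G : Set X) : Prop :=
  ∀ u : ℕ → X, (∀ n, u n ∈ G) →
    ∃ x ∈ G, ∃ k : ℕ → ℕ, StrictMono k ∧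
      Tendsto (fun n => ρ (d (u (k n)) x)) atTop (𝓝 0)

/-!
The ultrametric inequality, applied twice, shows that `d(uₙ, vₙ) ≼ d(x, y) + tₙ • e` and
`d(x, y) ≼ d(uₙ, vₙ) + tₙ • e`, where `tₙ = ρ(d(uₙ, x)) + ρ(d(vₙ, y))` and unitality turns the
bounds `ρ(d(uₙ, x)), ρ(d(vₙ, y)) ≤ tₙ` into cone bounds by `tₙ • e`. Normality makes these two
inequalities between values of `ρ`. Splitting `z + t • e` as a convex combination of `(1 + ε) • z`
and a multiple of `e`, convexity and Δ₂ give `ρ(z + t • e) ≤ (1 + ε k) ρ(z) + t` once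
`(1 + ε) t ≤ ε`, which squeezes `ρ(d(uₙ, vₙ))` to `ρ(d(x, y))`.
-/

section ConvexModular

variable {A : Type*} [AddCommGroup A] [Module ℝ A] {ρ : A → ℝ}

theorem IsConvexModular.map_zero (hρ : IsConvexModular ρ) : ρ 0 = 0 :=
  (hρ.1.1 0).2 rfl

theorem IsConvexModular.nonneg (hρ : IsConvexModular ρ) (z : A) : 0 ≤ ρ z := by
  have h := hρ.2 z (-z) (1 / 2) (1 / 2) (by norm_num) (by norm_num) (by norm_num)
  rw [show (1 / 2 : ℝ) • z + (1 / 2 : ℝ) • -z = 0 by module, hρ.map_zero, hρ.1.2.1] at h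
  linarith

theorem IsConvexModular.smul_le (hρ : IsConvexModular ρ) {s : ℝ} (hs₀ : 0 ≤ s) (hs₁ : s ≤ 1)
    (z : A) : ρ (s • z) ≤ s * ρ z := by
  simpa [hρ.map_zero] using hρ.2 z 0 s (1 - s) hs₀ (by linarith) (by ring)

theorem IsConvexModular.add_le (hρ : IsConvexModular ρ) {a b : ℝ} (ha : 0 < a) (hb : 0 < b)
    (hab : a + b = 1) (z w : A) : ρ (z + w) ≤ a * ρ (a⁻¹ • z) + b * ρ (b⁻¹ • w) := by
  simpa [smul_smul, ha.ne', hb.ne'] using hρ.2 (a⁻¹ • z) (b⁻¹ • w) a b ha.le hb.le hab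

theorem IsConvexModular.one_add_smul_le (hρ : IsConvexModular ρ) {k : ℝ}
    (hk : SatisfiesDelta2 ρ k) {ε : ℝ} (hε₀ : 0 ≤ ε) (hε₁ : ε ≤ 1) (z : A) :
    ρ ((1 + ε) • z) ≤ (1 + ε * k) * ρ z := by
  have h := hρ.2 z ((2 : ℝ) • z) (1 - ε) ε (by linarith) hε₀ (by ring)
  rw [show (1 - ε) • z + ε • (2 : ℝ) • z = (1 + ε) • z by module] at h
  nlinarith [hk.2 z, hρ.nonneg z]

theorem IsConvexModular.add_smul_le (hρ : IsConvexModular ρ) {k : ℝ}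
    (hk : SatisfiesDelta2 ρ k) {ε t : ℝ} (hε₀ : 0 < ε) (hε₁ : ε ≤ 1) (ht₀ : 0 ≤ t)
    (ht : (1 + ε) * t ≤ ε) (z w : A) : ρ (z + t • w) ≤ (1 + ε * k) * ρ z + t * ρ w := by
  have hε' : 0 < 1 + ε := by linarith
  have hs₁ : (1 + ε) / ε * t ≤ 1 := by rw [div_mul_eq_mul_div]; exact (div_le_one hε₀).2 ht
  have hsplit := hρ.add_le (inv_pos.2 hε') (div_pos hε₀ hε') (by field_simp) z (t • w)
  rw [inv_inv, inv_div, smul_smul] at hsplit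
  have hz : (1 + ε)⁻¹ * ρ ((1 + ε) • z) ≤ (1 + ε * k) * ρ z := by
    calc (1 + ε)⁻¹ * ρ ((1 + ε) • z) ≤ 1 * ((1 + ε * k) * ρ z) := by
          gcongr
          · exact hρ.nonneg _
          · exact inv_le_one_of_one_le₀ (by linarith)
          · exact hρ.one_add_smul_le hk hε₀.le hε₁ z
      _ = (1 + ε * k) * ρ z := one_mul _
  have hw : ε / (1 + ε) * ρ (((1 + ε) / ε * t) • w) ≤ t * ρ w := by
    calc ε / (1 + ε) * ρ (((1 + ε) / ε * t) • w)
        ≤ ε / (1 + ε) * ((1 + ε) / ε * t * ρ w) := by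
          gcongr
          exact hρ.smul_le (by positivity) hs₁ w
      _ = t * ρ w := by field_simp
  linarith

theorem IsConvexModular.abs_sub_le_of_le_add_smul (hρ : IsConvexModular ρ) {k : ℝ}
    (hk : SatisfiesDelta2 ρ k) {e : A} (he : ρ e = 1) {ε t : ℝ} (hε₀ : 0 < ε) (hε₁ : ε ≤ 1)
    (ht₀ : 0 ≤ t) (ht : (1 + ε) * t ≤ ε) {z c : A} (hz : ρ z ≤ ρ (c + t • e))
    (hc : ρ c ≤ ρ (z + t • e)) : |ρ z - ρ c| ≤ ε * k * ((1 + k) * ρ c + 1) + t := by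
  have hz' := hz.trans (hρ.add_smul_le hk hε₀ hε₁ ht₀ ht c e)
  have hc' := hc.trans (hρ.add_smul_le hk hε₀ hε₁ ht₀ ht z e)
  rw [he, mul_one] at hz' hc'
  have hc₀ := hρ.nonneg c
  have hεk : 0 ≤ ε * k := mul_nonneg hε₀.le hk.1.le
  have hz_bound : ρ z ≤ (1 + k) * ρ c + 1 := by nlinarith [mul_nonneg hk.1.le hc₀]
  rw [abs_le]
  constructor
  · nlinarith [mul_le_mul_of_nonneg_left hz_bound hεk]
  · nlinarith [mul_le_mul_of_nonneg_left hz_bound hεk, mul_nonneg hεk hc₀,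
      mul_nonneg (mul_nonneg hεk hk.1.le) hc₀]

theorem IsConvexModular.tendsto_of_le_add_smul (hρ : IsConvexModular ρ) {k : ℝ}
    (hk : SatisfiesDelta2 ρ k) {e : A} (he : ρ e = 1) {ι : Type*} {l : Filter ι}
    {t : ι → ℝ} (ht : Tendsto t l (𝓝 0)) (ht₀ : ∀ i, 0 ≤ t i) {z : ι → A} {c : A}
    (hz : ∀ i, ρ (z i) ≤ ρ (c + t i • e)) (hc : ∀ i, ρ c ≤ ρ (z i + t i • e)) :
    Tendsto (fun i => ρ (z i)) l (𝓝 (ρ c)) := by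
  rw [Metric.tendsto_nhds]
  intro δ hδ
  set M := k * ((1 + k) * ρ c + 1)
  have hM : 0 < M := mul_pos hk.1 (by nlinarith [hρ.nonneg c, hk.1])
  set ε := min 1 (δ / (2 * M))
  have hε₀ : 0 < ε := lt_min one_pos (by positivity)
  have hεM : ε * M ≤ δ / 2 := by
    calc ε * M ≤ δ / (2 * M) * M := by gcongr; exact min_le_right _ _
      _ = δ / 2 := by field_simp
  filter_upwards [ht.eventually (gt_mem_nhds (lt_min (half_pos hε₀) (half_pos hδ)))] with i hi
  have hi₁ : t i < ε / 2 := hi.trans_le (min_le_left _ _)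
  have hi₂ : t i < δ / 2 := hi.trans_le (min_le_right _ _)
  have hε₁ : ε ≤ 1 := min_le_left _ _
  have hbound := hρ.abs_sub_le_of_le_add_smul hk he hε₀ hε₁ (ht₀ i) (by nlinarith [ht₀ i])
    (hz i) (hc i)
  rw [Real.dist_eq]
  linarith

end ConvexModular

section Cone

variable {A : Type*} [AddCommGroup A] [Module ℝ A] {ρ : A → ℝ} {P : Set A}

theorem IsCone.add_mem (hP : IsCone ρ P) {p q : A} (hp : p ∈ P) (hq : q ∈ P) : p + q ∈ P := by
  simpa using hP.2.2.2.1 1 1 zero_le_one zero_le_one p hp q hq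

theorem IsCone.smul_mem (hP : IsCone ρ P) {s : ℝ} (hs : 0 ≤ s) {p : A} (hp : p ∈ P) :
    s • p ∈ P := by
  simpa using hP.2.2.2.1 s 0 hs le_rfl p hp p hp

theorem IsCone.coneLE_trans (hP : IsCone ρ P) {p q r : A} (hpq : coneLE P p q)
    (hqr : coneLE P q r) : coneLE P p r := by
  simpa [coneLE] using hP.add_mem hqr hpq

theorem coneLE_add_right {p : A} (c : A) (hp : p ∈ P) : coneLE P c (c + p) := by
  simpa [coneLE] using hp

theorem coneLE_add_left {c : A} (p : A) (hc : c ∈ P) : coneLE P p (c + p) := by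
  simpa [coneLE] using hc

theorem IsUnit'.coneLE_smul (hP : IsCone ρ P) {e : A} (he : IsUnit' ρ P e) {p : A} (hp : p ∈ P)
    {t : ℝ} (ht : ρ p ≤ t) : coneLE P p (t • e) :=
  hP.coneLE_trans (he.2.2 p hp) (by
    rw [coneLE, ← sub_smul]
    exact hP.smul_mem (sub_nonneg.2 ht) he.1)

end Cone

section VectorUltrametric

variable {A : Type*} [AddCommGroup A] [Module ℝ A] {ρ : A → ℝ} {P : Set A}
  {X : Type*} {d : X → X → A}

theorem IsVectorUltrametric.coneLE_add (hd : IsVectorUltrametric P d) (hP : IsCone ρ P)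
    {u v x y : X} {p : A} (hp : p ∈ P) (hux : coneLE P (d u x) p) (hvy : coneLE P (d v y) p) :
    coneLE P (d u v) (d x y + p) := by
  have hq : d x y + p ∈ P := hP.add_mem (hd.1 x y) hp
  have hp_le : coneLE P p (d x y + p) := coneLE_add_left p (hd.1 x y)
  have hxv : coneLE P (d x v) (d x y + p) :=
    hd.2.2.2 x v y _ hq (coneLE_add_right _ hp) (hP.coneLE_trans hvy hp_le)
  exact hd.2.2.2 u v x _ hq (hP.coneLE_trans hux hp_le) (by rwa [hd.2.2.1 v x])

theorem IsVectorUltrametric.rho_le_rho_add_smul (hd : IsVectorUltrametric P d)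
    (hρ : IsConvexModular ρ) (hP : IsCone ρ P) (hnormal : IsNormalCone1 ρ P) {e : A}
    (he : IsUnit' ρ P e) (u v x y : X) :
    ρ (d u v) ≤ ρ (d x y + (ρ (d u x) + ρ (d v y)) • e) := by
  have hux := he.coneLE_smul hP (hd.1 u x) (le_add_of_nonneg_right (hρ.nonneg (d v y)))
  have hvy := he.coneLE_smul hP (hd.1 v y) (le_add_of_nonneg_left (hρ.nonneg (d u x)))
  exact hnormal _ _ (hd.1 u v) (hd.coneLE_add hP (hP.smul_mem (by
    linarith [hρ.nonneg (d u x), hρ.nonneg (d v y)]) he.1) hux hvy)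

end VectorUltrametric

theorem vum_joint_continuity_general
    {A : Type*} [AddCommGroup A] [Module ℝ A] (ρ : A → ℝ)
    (hconv : IsConvexModular ρ) (hΔ₂ : ∃ k : ℝ, SatisfiesDelta2 ρ k)
    (P : Set A) (hP : IsCone ρ P) (hnormal : IsNormalCone1 ρ P)
    (hunital : ∃ e : A, IsUnit' ρ P e)
    {X : Type*} (d : X → X → A)
    (hd : IsVectorUltrametric P d)
    (x y : X) (u v : ℕ → X)
    (hu : Tendsto (fun n => ρ (d (u n) x)) atTop (𝓝 0))
    (hv : Tendsto (fun n => ρ (d (v n) y)) atTop (𝓝 0)) :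
    Tendsto (fun n => ρ (d (u n) (v n))) atTop (𝓝 (ρ (d x y))) := by
  obtain ⟨k, hk⟩ := hΔ₂
  obtain ⟨e, he⟩ := hunital
  have ht : Tendsto (fun n => ρ (d (u n) x) + ρ (d (v n) y)) atTop (𝓝 0) := by
    simpa using hu.add hv
  refine hconv.tendsto_of_le_add_smul hk he.2.1 ht
    (fun n => add_nonneg (hconv.nonneg _) (hconv.nonneg _))
    (fun n => hd.rho_le_rho_add_smul hconv hP hnormal he _ _ _ _) (fun n => ?_)
  have h := hd.rho_le_rho_add_smul hconv hP hnormal he x y (u n) (v n)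
  rwa [hd.2.2.1 x (u n), hd.2.2.1 y (v n)] at h

/-- Joint continuity of the vector ultrametric: if `xₙ → x` and `yₙ → y`
then `ρ(d(xₙ, yₙ)) → ρ(d(x, y))`. -/
theorem vum_joint_continuity
    {A : Type*} [AddCommGroup A] [Module ℝ A] (ρ : A → ℝ)
    (hconv : IsConvexModular ρ) (hΔ₂ : ∃ k : ℝ, SatisfiesDelta2 ρ k)
    (hms : IsModularSpace ρ) (hcomplete : RhoComplete ρ)
    (P : Set A) (hP : IsCone ρ P) (hnormal : IsNormalCone1 ρ P)
    (hunital : ∃ e : A, IsUnit' ρ P e)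
    {X : Type*} [Nonempty X] (d : X → X → A)
    (hd : IsVectorUltrametric P d)
    (x y : X) (u v : ℕ → X)
    (hu : Tendsto (fun n => ρ (d (u n) x)) atTop (𝓝 0))
    (hv : Tendsto (fun n => ρ (d (v n) y)) atTop (𝓝 0)) :
    Tendsto (fun n => ρ (d (u n) (v n))) atTop (𝓝 (ρ (d x y))) :=
  vum_joint_continuity_general ρ hconv hΔ₂ P hP hnormal hunital d hd x y u v hu hv
end

section
/- Let N be a real normed space and let (αₙ) be a sequence of positive real numbers decreasing to zero. For sequences x = (xₙ), y = (yₙ), z = (zₙ) in N with limsup_{n→∞} ‖xₙ‖^{αₙ} < ∞, limsup_{n→∞} ‖yₙ‖^{αₙ} < ∞ and limsup_{n→∞} ‖zₙ‖^{αₙ} < ∞, the quantity D(x,y) = limsup_{n→∞} ‖xₙ − yₙ‖^{αₙ} satisfies the strong triangle inequality: D(x,z) ≤ max{D(x,y), D(y,z)}. -/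
/-!
Since `s + t ≤ 2 max s t`, the triangle inequality gives
`‖xₙ - zₙ‖^{αₙ} ≤ 2^{αₙ} max (‖xₙ - yₙ‖^{αₙ}, ‖yₙ - zₙ‖^{αₙ})`, and the factor `2^{αₙ}` tends
to `1` because `αₙ → 0`; taking `limsup` turns the quasi-ultrametric bound into an ultrametric one.
The same bound with `y = 0` shows that all the `limsup`s involved are finite.
-/

open Filter Topology

lemma Real.add_rpow_le_two_rpow_mul_max {s t p : ℝ} (hs : 0 ≤ s) (ht : 0 ≤ t) (hp : 0 ≤ p) :
    (s + t) ^ p ≤ 2 ^ p * max (s ^ p) (t ^ p) := calc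
  (s + t) ^ p ≤ (2 * max s t) ^ p := by
    rw [two_mul]; gcongr <;> [exact le_max_left s t; exact le_max_right s t]
  _ = 2 ^ p * max s t ^ p := Real.mul_rpow zero_le_two (le_max_of_le_left hs)
  _ = 2 ^ p * max (s ^ p) (t ^ p) := by rw [Real.rpow_max hs ht hp]

lemma norm_sub_rpow_le_two_rpow_mul_max {E : Type*} [SeminormedAddCommGroup E] (u v w : E)
    {p : ℝ} (hp : 0 ≤ p) : ‖u - w‖ ^ p ≤ 2 ^ p * max (‖u - v‖ ^ p) (‖v - w‖ ^ p) := calc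
  ‖u - w‖ ^ p ≤ (‖u - v‖ + ‖v - w‖) ^ p := by gcongr; exact norm_sub_le_norm_sub_add_norm_sub u v w
  _ ≤ 2 ^ p * max (‖u - v‖ ^ p) (‖v - w‖ ^ p) :=
    Real.add_rpow_le_two_rpow_mul_max (norm_nonneg _) (norm_nonneg _) hp

section Sequences

variable {ι E : Type*} [SeminormedAddCommGroup E] {l : Filter ι} {α : ι → ℝ}

lemma tendsto_two_rpow_one (hα : Tendsto α l (𝓝 0)) : Tendsto (fun i => (2 : ℝ) ^ α i) l (𝓝 1) := by
  simpa [Function.comp_def] using ((Real.continuousAt_const_rpow two_ne_zero).tendsto.comp hα)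

lemma isBoundedUnder_le_two_rpow_mul_max [l.NeBot] (hα : Tendsto α l (𝓝 0)) {a b : ι → ℝ}
    (ha₀ : ∀ i, 0 ≤ a i) (ha : IsBoundedUnder (· ≤ ·) l a) (hb : IsBoundedUnder (· ≤ ·) l b) :
    IsBoundedUnder (· ≤ ·) l (fun i => 2 ^ α i * max (a i) (b i)) :=
  isBoundedUnder_le_mul_of_nonneg (.of_forall fun _ => by positivity)
    (tendsto_two_rpow_one hα).isBoundedUnder_le
    (.of_forall fun i => le_max_of_le_left (ha₀ i)) (ha.sup hb)

lemma isBoundedUnder_norm_sub_rpow [l.NeBot] (hα₀ : ∀ i, 0 ≤ α i) (hα : Tendsto α l (𝓝 0))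
    {u v : ι → E}
    (hu : IsBoundedUnder (· ≤ ·) l (fun i => ‖u i‖ ^ α i))
    (hv : IsBoundedUnder (· ≤ ·) l (fun i => ‖v i‖ ^ α i)) :
    IsBoundedUnder (· ≤ ·) l (fun i => ‖u i - v i‖ ^ α i) :=
  (isBoundedUnder_le_two_rpow_mul_max hα (fun _ => by positivity) hu hv).mono_le <|
    .of_forall fun i => by simpa using norm_sub_rpow_le_two_rpow_mul_max (u i) 0 (v i) (hα₀ i)

lemma limsup_norm_sub_rpow_le_max [l.NeBot] (hα₀ : ∀ i, 0 ≤ α i) (hα : Tendsto α l (𝓝 0))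
    {u v w : ι → E} (huv : IsBoundedUnder (· ≤ ·) l (fun i => ‖u i - v i‖ ^ α i))
    (hvw : IsBoundedUnder (· ≤ ·) l (fun i => ‖v i - w i‖ ^ α i)) :
    limsup (fun i => ‖u i - w i‖ ^ α i) l ≤
      max (limsup (fun i => ‖u i - v i‖ ^ α i) l) (limsup (fun i => ‖v i - w i‖ ^ α i) l) := calc
  _ ≤ limsup (fun i => 2 ^ α i * max (‖u i - v i‖ ^ α i) (‖v i - w i‖ ^ α i)) l :=
    limsup_le_limsup (.of_forall fun i => norm_sub_rpow_le_two_rpow_mul_max _ _ _ (hα₀ i))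
      (isCoboundedUnder_le_of_le l fun _ => by positivity)
      (isBoundedUnder_le_two_rpow_mul_max hα (fun _ => by positivity) huv hvw)
  _ ≤ limsup (fun i => (2 : ℝ) ^ α i) l *
        limsup (fun i => max (‖u i - v i‖ ^ α i) (‖v i - w i‖ ^ α i)) l :=
    limsup_mul_le (.of_forall fun _ => by positivity) (tendsto_two_rpow_one hα).isBoundedUnder_le
      (.of_forall fun _ => by positivity) (huv.sup hvw)
  _ = _ := by
    rw [(tendsto_two_rpow_one hα).limsup_eq, one_mul,
      limsup_max (isCoboundedUnder_le_of_le l fun _ => by positivity)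
        (isCoboundedUnder_le_of_le l fun _ => by positivity) huv hvw]

end Sequences

theorem limsup_rpow_strong_triangle_general
    {N : Type*} [NormedAddCommGroup N]
    (α : ℕ → ℝ) (hαpos : ∀ n, 0 < α n)
    (hαlim : Tendsto α atTop (𝓝 0))
    (x y z : ℕ → N)
    (hx : IsBoundedUnder (· ≤ ·) atTop (fun n => ‖x n‖ ^ α n))
    (hy : IsBoundedUnder (· ≤ ·) atTop (fun n => ‖y n‖ ^ α n))
    (hz : IsBoundedUnder (· ≤ ·) atTop (fun n => ‖z n‖ ^ α n)) :
    limsup (fun n => ‖x n - z n‖ ^ α n) atTop ≤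
      max (limsup (fun n => ‖x n - y n‖ ^ α n) atTop)
          (limsup (fun n => ‖y n - z n‖ ^ α n) atTop) := by
  have hα₀ : ∀ n, 0 ≤ α n := fun n => (hαpos n).le
  exact limsup_norm_sub_rpow_le_max hα₀ hαlim (isBoundedUnder_norm_sub_rpow hα₀ hαlim hx hy)
    (isBoundedUnder_norm_sub_rpow hα₀ hαlim hy hz)

/-- For sequences in a normed space with `limsup ‖xₙ‖^{αₙ} < ∞`, the quantity
`D(x,y) = limsup ‖xₙ - yₙ‖^{αₙ}` satisfies the strong triangle inequality. -/
theorem limsup_rpow_strong_triangle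
    {N : Type*} [NormedAddCommGroup N] [NormedSpace ℝ N]
    (α : ℕ → ℝ) (hαpos : ∀ n, 0 < α n) (hαdec : Antitone α)
    (hαlim : Tendsto α atTop (𝓝 0))
    (x y z : ℕ → N)
    (hx : IsBoundedUnder (· ≤ ·) atTop (fun n => ‖x n‖ ^ α n))
    (hy : IsBoundedUnder (· ≤ ·) atTop (fun n => ‖y n‖ ^ α n))
    (hz : IsBoundedUnder (· ≤ ·) atTop (fun n => ‖z n‖ ^ α n)) :
    limsup (fun n => ‖x n - z n‖ ^ α n) atTop ≤
      max (limsup (fun n => ‖x n - y n‖ ^ α n) atTop)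
          (limsup (fun n => ‖y n - z n‖ ^ α n) atTop) :=
  limsup_rpow_strong_triangle_general α hαpos hαlim x y z hx hy hz
end

section
/- Let (X, d) be a spherically complete ultrametric space and let φ be a correspondence on X assigning to each x ∈ X a nonempty compact subset φ(x) ⊆ X. If for every x, y ∈ X with x ≠ y and every p ∈ φ(x) there exists q ∈ φ(y) such that d(p,q) < max{d(x,p), d(x,y), d(y,q)}, then φ has a fixed point: there exists g ∈ X with g ∈ φ(g). -/
/-!
Suppose `φ` has no fixed point and put `ρ x = infDist x (φ x)`, which is positive and attained
since `φ x` is compact. The contraction hypothesis together with the strong triangle inequality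
shows that `ρ` does not increase inside `closedBall x (ρ x)`, so these balls are nested whenever
one centre lies in the other ball. Spherical completeness and Zorn's lemma then give a minimal
such ball `closedBall z (ρ z)`. A nearest point `p ∈ φ z` lies in it, so by minimality `z` lies in
`closedBall p (ρ p)`; but the hypothesis applied to `z, p, p` gives `ρ p < dist z p`.
-/

open Metric

/-- An ultrametric space: the metric satisfies the strong triangle inequality. -/
def IsUltrametric' {X : Type*} [MetricSpace X] : Prop :=
  ∀ x y z : X, dist x z ≤ max (dist x y) (dist y z)

/-- Spherical completeness: every chain of closed balls (of positive radius)
has nonempty intersection. -/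
def SphericallyCompleteMetric (X : Type*) [MetricSpace X] : Prop :=
  ∀ C : Set (Set X),
    (∀ S ∈ C, ∃ (x : X) (r : ℝ), 0 < r ∧ S = Metric.closedBall x r) →
    IsChain (· ⊆ ·) C → (⋂₀ C).Nonempty

section Correspondence

variable {X : Type*} [MetricSpace X] {φ : X → Set X}

theorem infDist_lt_dist_of_mem_of_ne
    (hφ : ∀ x y : X, x ≠ y → ∀ p ∈ φ x, ∃ q ∈ φ y,
      dist p q < max (dist x p) (max (dist x y) (dist y q)))
    {z p : X} (hp : p ∈ φ z) (hzp : z ≠ p) : infDist p (φ p) < dist z p := by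
  obtain ⟨q, hq, hφq⟩ := hφ z p hzp p hp
  have hpq : dist p q < dist z p := by
    by_contra! hle
    rw [max_eq_right hle, max_eq_right hle] at hφq
    exact hφq.false
  exact (infDist_le_dist_of_mem hq).trans_lt hpq

variable [IsUltrametricDist X]
  (hφ : ∀ x y : X, x ≠ y → ∀ p ∈ φ x, ∃ q ∈ φ y,
    dist p q < max (dist x p) (max (dist x y) (dist y q)))
include hφ

theorem exists_mem_dist_le_of_dist_le {x y p : X} (hp : p ∈ φ x) (hxy : dist x y ≤ dist x p) :
    ∃ q ∈ φ y, dist y q ≤ dist x p := by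
  rcases eq_or_ne x y with rfl | hne
  · exact ⟨p, hp, le_rfl⟩
  obtain ⟨q, hq, hφq⟩ := hφ x y hne p hp
  refine ⟨q, hq, le_of_not_gt fun hlt => ?_⟩
  have hpq : dist p q < dist y q := by
    rwa [max_eq_right (hxy.trans hlt.le), max_eq_right hlt.le] at hφq
  have : dist y q ≤ max (dist y x) (max (dist x p) (dist p q)) :=
    (dist_triangle_max y x q).trans (max_le_max le_rfl (dist_triangle_max x p q))
  refine this.not_gt (max_lt ?_ (max_lt hlt hpq))
  rw [dist_comm]
  exact hxy.trans_lt hlt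

theorem closedBall_infDist_subset (hcomp : ∀ x, IsCompact (φ x)) (hne : ∀ x, (φ x).Nonempty)
    {x y : X} (hy : y ∈ closedBall x (infDist x (φ x))) :
    closedBall y (infDist y (φ y)) ⊆ closedBall x (infDist x (φ x)) := by
  obtain ⟨p, hp, hxp⟩ := (hcomp x).exists_infDist_eq_dist (hne x) x
  have hxy : dist x y ≤ dist x p := by rwa [mem_closedBall, dist_comm, hxp] at hy
  obtain ⟨q, hq, hyq⟩ := exists_mem_dist_le_of_dist_le hφ hp hxy
  rw [IsUltrametricDist.closedBall_eq_of_mem hy]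
  exact closedBall_subset_closedBall ((infDist_le_dist_of_mem hq).trans (hxp ▸ hyq))

end Correspondence

theorem SphericallyCompleteMetric.exists_minimal_closedBall {X : Type*} [MetricSpace X]
    (hsc : SphericallyCompleteMetric X) {ρ : X → ℝ} (hρ : ∀ x, 0 < ρ x)
    (hmono : ∀ x, ∀ y ∈ closedBall x (ρ x), closedBall y (ρ y) ⊆ closedBall x (ρ x)) :
    ∃ z, ∀ y ∈ closedBall z (ρ z), closedBall y (ρ y) = closedBall z (ρ z) := by
  have hchain : ∀ c ⊆ Set.range (fun x => closedBall x (ρ x)), IsChain (· ⊆ ·) c →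
      ∃ lb ∈ Set.range (fun x => closedBall x (ρ x)), ∀ s ∈ c, lb ⊆ s := by
    intro c hc hchain
    -- for `c = ∅` this still provides a point, since `⋂₀ ∅ = univ`
    obtain ⟨z, hz⟩ := hsc c (fun s hs => by
      obtain ⟨x, rfl⟩ := hc hs
      exact ⟨x, ρ x, hρ x, rfl⟩) hchain
    refine ⟨closedBall z (ρ z), ⟨z, rfl⟩, fun s hs => ?_⟩
    obtain ⟨x, rfl⟩ := hc hs
    exact hmono x z (hz _ hs)
  obtain ⟨_, hmin⟩ := zorn_superset _ hchain
  obtain ⟨z, hz⟩ := hmin.prop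
  subst hz
  exact ⟨z, fun y hy => hmin.eq_of_le ⟨y, rfl⟩ (hmono z y hy)⟩

/-- Fixed point theorem for correspondences with nonempty compact values on a
spherically complete ultrametric space. -/
theorem ultrametric_fixed_point
    {X : Type*} [MetricSpace X]
    (hultra : @IsUltrametric' X _)
    (hsc : SphericallyCompleteMetric X)
    (φ : X → Set X) (hne : ∀ x, (φ x).Nonempty) (hcomp : ∀ x, IsCompact (φ x))
    (hyp : ∀ x y : X, x ≠ y → ∀ p ∈ φ x, ∃ q ∈ φ y,
      dist p q < max (dist x p) (max (dist x y) (dist y q))) :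
    ∃ g : X, g ∈ φ g := by
  have : IsUltrametricDist X := ⟨hultra⟩
  by_contra! hfix
  have hpos : ∀ x, 0 < infDist x (φ x) := fun x =>
    ((hcomp x).isClosed.notMem_iff_infDist_pos (hne x)).mp (hfix x)
  obtain ⟨z, hmin⟩ := hsc.exists_minimal_closedBall hpos
    fun _ _ => closedBall_infDist_subset hyp hcomp hne
  obtain ⟨p, hp, hp_nearest⟩ := (hcomp z).exists_infDist_eq_dist (hne z) z
  have hp_ball : p ∈ closedBall z (infDist z (φ z)) := by
    rw [mem_closedBall, dist_comm, hp_nearest]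
  have hz_ball : z ∈ closedBall p (infDist p (φ p)) := by
    rw [hmin p hp_ball]
    exact mem_closedBall_self (hpos z).le
  have hlt := infDist_lt_dist_of_mem_of_ne hyp hp fun h => hfix z (h ▸ hp)
  exact (mem_closedBall.mp hz_ball).not_gt hlt
end

section
/- Let (X, d) be a spherically complete ultrametric space and let φ be a correspondence on X assigning to each x ∈ X a nonempty compact subset φ(x) ⊆ X. If for every x, y ∈ X with x ≠ y and every p ∈ φ(x) there exists q ∈ φ(y) such that d(p,q) < d(x,y), then φ has a fixed point: there exists g ∈ X with g ∈ φ(g). -/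
/-!
Suppose `φ` has no fixed point, so `r x = infDist x (φ x)` is positive. Contractivity makes `r`
non-increasing inside the ball `B x = closedBall x (r x)`, so in the ultrametric space these balls
are nested whenever their centres are, and spherical completeness with Zorn's lemma yields a
minimal one, `B x`. For a nearest point `p ∈ φ x` minimality forces `x ∈ B p`, i.e.
`r x = dist x p ≤ r p`, whereas contractivity applied to `x ≠ p` and `p ∈ φ x` gives
`r p < dist x p`.
-/

open Metric

theorem SphericallyCompleteMetric.exists_mem_closedBall_of_mem_closedBall {X : Type*}
    [MetricSpace X] [IsUltrametricDist X] (hsc : SphericallyCompleteMetric X) {ρ : X → ℝ}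
    (hρ : ∀ x, 0 < ρ x) (hmono : ∀ x, ∀ z ∈ closedBall x (ρ x), ρ z ≤ ρ x) :
    ∃ x, ∀ z ∈ closedBall x (ρ x), x ∈ closedBall z (ρ z) := by
  have hsub : ∀ x, ∀ z ∈ closedBall x (ρ x), closedBall z (ρ z) ⊆ closedBall x (ρ x) :=
    fun x z hz => (closedBall_subset_closedBall (hmono x z hz)).trans
      (IsUltrametricDist.closedBall_eq_of_mem hz).symm.subset
  have hlb : ∀ c ⊆ Set.range (fun x => closedBall x (ρ x)), IsChain (· ⊆ ·) c →
      ∃ lb ∈ Set.range (fun x => closedBall x (ρ x)), ∀ s ∈ c, lb ⊆ s := by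
    intro c hc hchain
    obtain ⟨z, hz⟩ := hsc c (fun s hs => by obtain ⟨x, rfl⟩ := hc hs; exact ⟨x, ρ x, hρ x, rfl⟩)
      hchain
    refine ⟨closedBall z (ρ z), ⟨z, rfl⟩, fun s hs => ?_⟩
    obtain ⟨x, rfl⟩ := hc hs
    exact hsub x z (hz _ hs)
  obtain ⟨m, hm⟩ := zorn_superset _ hlb
  obtain ⟨x, rfl⟩ := hm.prop
  refine ⟨x, fun z hz => ?_⟩
  have hball : closedBall z (ρ z) = closedBall x (ρ x) := hm.eq_of_le ⟨z, rfl⟩ (hsub x z hz)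
  exact hball.symm ▸ mem_closedBall_self (hρ x).le

theorem infDist_le_max_of_forall_exists_dist_lt {X : Type*} [MetricSpace X]
    [IsUltrametricDist X] {φ : X → Set X} (hne : ∀ x, (φ x).Nonempty)
    (hcomp : ∀ x, IsCompact (φ x))
    (hyp : ∀ x y : X, x ≠ y → ∀ p ∈ φ x, ∃ q ∈ φ y, dist p q < dist x y) (x z : X) :
    infDist z (φ z) ≤ max (dist x z) (infDist x (φ x)) := by
  rcases eq_or_ne x z with rfl | hxz
  · exact le_max_right _ _
  obtain ⟨p, hp, hxp⟩ := (hcomp x).exists_infDist_eq_dist (hne x) x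
  obtain ⟨q, hq, hpq⟩ := hyp x z hxz p hp
  calc infDist z (φ z) ≤ dist z q := infDist_le_dist_of_mem hq
    _ ≤ max (dist z p) (dist p q) := IsUltrametricDist.dist_triangle_max _ _ _
    _ ≤ max (max (dist z x) (dist x p)) (dist x z) :=
      max_le_max (IsUltrametricDist.dist_triangle_max _ _ _) hpq.le
    _ = max (dist x z) (infDist x (φ x)) := by
      rw [dist_comm z x, ← hxp, max_comm (dist x z), max_assoc, max_self]

/-- Fixed point theorem for correspondences with nonempty compact values on a
spherically complete ultrametric space. -/
theorem ultrametric_fixed_point_contractive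
    {X : Type*} [MetricSpace X]
    (hultra : @IsUltrametric' X _)
    (hsc : SphericallyCompleteMetric X)
    (φ : X → Set X) (hne : ∀ x, (φ x).Nonempty) (hcomp : ∀ x, IsCompact (φ x))
    (hyp : ∀ x y : X, x ≠ y → ∀ p ∈ φ x, ∃ q ∈ φ y,
      dist p q < dist x y) :
    ∃ g : X, g ∈ φ g := by
  have : IsUltrametricDist X := ⟨hultra⟩
  by_contra! hfix
  have hr : ∀ x, 0 < infDist x (φ x) := fun x =>
    ((hcomp x).isClosed.notMem_iff_infDist_pos (hne x)).mp (hfix x)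
  obtain ⟨x, hx⟩ := hsc.exists_mem_closedBall_of_mem_closedBall hr fun x z hz =>
    (infDist_le_max_of_forall_exists_dist_lt hne hcomp hyp x z).trans
      (max_le (mem_closedBall'.mp hz) le_rfl)
  obtain ⟨p, hp, hxp⟩ := (hcomp x).exists_infDist_eq_dist (hne x) x
  obtain ⟨q, hq, hpq⟩ := hyp x p (fun h => hfix x (h ▸ hp)) p hp
  have hxp_le : dist x p ≤ infDist p (φ p) := hx p (mem_closedBall'.mpr hxp.ge)
  exact (((infDist_le_dist_of_mem hq).trans_lt hpq).trans_le hxp_le).false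
end
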